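/- Let X ⊆ E be a closed convex subset of a finite-dimensional real normed space, let f and g be strongly convex on X with the same parameter μ > 0, and let x_* be a solution of the regular problem min{ f(x) : x ∈ X, g(x) ≤ 0 }. If a random point x̃ ∈ X satisfies E f(x̃) − f(x_*) ≤ ε and g(x̃) ≤ ε almost surely, then (μ/2)·E‖x̃ − x_*‖_E² ≤ ε. -/

import Mathlib

open MeasureTheory

/-- `p` is a subgradient of `f` at `x` relative to the set `X`. -/
def IsSubgradOn {E : Type*} [NormedAddCommGroup E] [NormedSpace ℝ E]
    (X : Set E) (f : E → ℝ) (x : E) (p : E →L[ℝ] ℝ) : Prop :=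
  ∀ y ∈ X, f x + p (y - x) ≤ f y

/-!
By Slater's condition there is a multiplier `κ ≥ 0` with `f xs ≤ f y + κ * g y` on `X`; as
`g xs ≤ 0`, the point `xs` minimises the Lagrangian `f + κ • g` over `X`. The Lagrangian is
`(1 + κ) μ`-strongly convex, so it grows quadratically away from its minimiser:
`f y + κ * g y ≥ f xs + (1 + κ) μ / 2 * ‖y - xs‖ ^ 2` on `X`. Taking `y = x̃`, using `g x̃ ≤ ε` and
integrating gives `(1 + κ) μ / 2 * E ‖x̃ - xs‖ ^ 2 ≤ (1 + κ) ε`.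

Strong convexity is only assumed at points having a subgradient. These include the relative
interior of `X`, where the supporting-hyperplane theorem applies; quadratic growth then reaches
boundary points by pushing segments slightly towards the Slater point `xbar`.
-/

open Set Filter Pointwise

lemma le_of_forall_mem_Ioo_le {a : ℝ} {R : ℝ → ℝ} (hR : ContinuousAt R 0)
    (h : ∀ s ∈ Ioo (0 : ℝ) 1, a ≤ R s) : a ≤ R 0 :=
  ge_of_tendsto (hR.tendsto.mono_left nhdsWithin_le_nhds)
    (mem_of_superset (Ioo_mem_nhdsGT one_pos) h)

lemma nonneg_of_forall_pos_add_mul_pos {a b : ℝ} (h : ∀ t : ℝ, 0 < t → 0 < a + t * b) :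
    0 ≤ a ∧ 0 ≤ b := by
  refine ⟨?_, ?_⟩
  · simpa using le_of_forall_mem_Ioo_le (a := 0) (R := fun t => a + t * b) (by fun_prop)
      fun t ht => (h t ht.1).le
  · by_contra! hb
    have := h ((|a| + 1) / -b) (div_pos (by positivity) (neg_pos.2 hb))
    rw [div_mul_eq_mul_div, div_neg, mul_div_cancel_right₀ _ hb.ne] at this
    linarith [le_abs_self a]

theorem ContinuousOn.isOpen_strict_epigraph {α : Type*} [TopologicalSpace α] {U : Set α}
    {f : α → ℝ} (hf : ContinuousOn f U) (hU : IsOpen U) :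
    IsOpen {q : α × ℝ | q.1 ∈ U ∧ f q.1 < q.2} := by
  have hC : {q : α × ℝ | q.1 ∈ U ∧ f q.1 < q.2} =
      Prod.fst ⁻¹' U ∩ (fun q : α × ℝ => f q.1 - q.2) ⁻¹' Iio 0 := by
    ext q; simp [sub_neg]
  rw [hC]
  exact ((hf.comp continuous_fst.continuousOn fun q hq => hq).sub
    continuous_snd.continuousOn).isOpen_inter_preimage (hU.preimage continuous_fst) isOpen_Iio

section IntrinsicInterior

variable {E : Type*} [NormedAddCommGroup E] [NormedSpace ℝ E] {X : Set E} {x : E}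

theorem mem_intrinsicInterior_iff_exists_ball :
    x ∈ intrinsicInterior ℝ X ↔
      x ∈ X ∧ ∃ ε > 0, ∀ y ∈ affineSpan ℝ X, dist y x < ε → y ∈ X := by
  constructor
  · rintro ⟨x, hx, rfl⟩
    obtain ⟨ε, hε, hball⟩ := Metric.mem_nhds_iff.1 (mem_interior_iff_mem_nhds.1 hx)
    exact ⟨hball (Metric.mem_ball_self hε), ε, hε, fun y hy hyx => @hball ⟨y, hy⟩ hyx⟩
  · rintro ⟨hxX, ε, hε, hball⟩
    refine ⟨⟨x, subset_affineSpan ℝ X hxX⟩, mem_interior_iff_mem_nhds.2 ?_, rfl⟩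
    exact Metric.mem_nhds_iff.2 ⟨ε, hε, fun y hy => hball y y.2 hy⟩

theorem Convex.combo_intrinsicInterior_self_mem_intrinsicInterior (hX : Convex ℝ X) {w y : E}
    (hw : w ∈ intrinsicInterior ℝ X) (hy : y ∈ X) {a b : ℝ} (ha : 0 < a) (hb : 0 ≤ b)
    (hab : a + b = 1) : a • w + b • y ∈ intrinsicInterior ℝ X := by
  obtain ⟨hwX, ε, hε, hball⟩ := mem_intrinsicInterior_iff_exists_ball.1 hw
  have hmem : a • w + b • y ∈ X := hX hwX hy ha.le hb hab
  refine mem_intrinsicInterior_iff_exists_ball.2 ⟨hmem, a * ε, mul_pos ha hε, fun q hq hqd => ?_⟩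
  -- `q` is the same combination with `w` replaced by a point within `ε` of `w`
  set w' := w + a⁻¹ • (q - (a • w + b • y))
  have hw' : w' ∈ X := by
    refine hball w' ?_ ?_
    · have hdir := (affineSpan ℝ X).direction.smul_mem a⁻¹
        (AffineSubspace.vsub_mem_direction hq (subset_affineSpan ℝ X hmem))
      simpa [w', vadd_eq_add, add_comm] using
        AffineSubspace.vadd_mem_of_mem_direction hdir (subset_affineSpan ℝ X hwX)
    · rw [dist_eq_norm, add_sub_cancel_left, norm_smul, norm_inv, Real.norm_of_nonneg ha.le,
        ← dist_eq_norm, inv_mul_lt_iff₀ ha]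
      exact hqd
  have hq : q = a • w' + b • y := by
    simp only [w', smul_add, smul_smul, mul_inv_cancel₀ ha.ne', one_smul]
    abel
  rw [hq]
  exact hX hw' hy ha.le hb hab

protected theorem Convex.intrinsicInterior (hX : Convex ℝ X) :
    Convex ℝ (intrinsicInterior ℝ X) := by
  intro w hw y hy a b ha hb hab
  rcases ha.eq_or_lt with rfl | ha
  · simpa [show b = 1 by linarith] using hy
  · exact hX.combo_intrinsicInterior_self_mem_intrinsicInterior hw (intrinsicInterior_subset hy)
      ha hb hab

end IntrinsicInterior

section Subgradient

variable {E : Type*} [NormedAddCommGroup E] [NormedSpace ℝ E] {X : Set E} {f : E → ℝ} {x : E}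

theorem ConvexOn.isSubgradOn_of_forall_mem_interior (hf : ConvexOn ℝ X f) (hx : x ∈ interior X)
    {p : E →L[ℝ] ℝ} (hp : ∀ y ∈ interior X, f x + p (y - x) ≤ f y) : IsSubgradOn X f x p := by
  intro y hy
  -- the midpoint of `x` and `y` is an interior point
  have hm := hf.1.combo_interior_self_mem_interior hx hy (a := 1 / 2) (b := 1 / 2)
    (by norm_num) (by norm_num) (by norm_num)
  have h1 := hp _ hm
  have h2 : f ((1 / 2 : ℝ) • x + (1 / 2 : ℝ) • y) ≤ (1 / 2 : ℝ) • f x + (1 / 2 : ℝ) • f y :=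
    hf.2 (interior_subset hx) hy (by norm_num) (by norm_num) (by norm_num)
  rw [show (1 / 2 : ℝ) • x + (1 / 2 : ℝ) • y - x = (1 / 2 : ℝ) • (y - x) by module, map_smul,
    smul_eq_mul] at h1
  simp only [smul_eq_mul] at h2
  linarith

variable [FiniteDimensional ℝ E]

theorem ConvexOn.exists_isSubgradOn_of_mem_interior (hf : ConvexOn ℝ X f)
    (hx : x ∈ interior X) : ∃ p : E →L[ℝ] ℝ, IsSubgradOn X f x p := by
  -- a hyperplane through `(x, f x)` below the open strict epigraph of `f` over `interior X`
  have hCconv : Convex ℝ {q : E × ℝ | q.1 ∈ interior X ∧ f q.1 < q.2} :=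
    convex_iff_openSegment_subset.2 fun p hp q hq =>
      (hf.subset interior_subset hf.1.interior).openSegment_subset_strict_epigraph p q hp
        ⟨hq.1, hq.2.le⟩
  obtain ⟨φ, hφ⟩ := geometric_hahn_banach_point_open hCconv
    (hf.continuousOn_interior.isOpen_strict_epigraph isOpen_interior)
    (fun h => lt_irrefl _ h.2 : (x, f x) ∉ {q : E × ℝ | q.1 ∈ interior X ∧ f q.1 < q.2})
  set β := φ (0, 1)
  have hsplit : ∀ y r, φ (y, r) = φ (y, 0) + r * β := fun y r => by
    rw [← smul_eq_mul, ← map_smul, ← map_add, Prod.smul_mk, smul_zero, smul_eq_mul, mul_one,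
      Prod.mk_add_mk, add_zero, zero_add]
  have hβ : 0 < β := by
    have := hφ (x, f x + 1) ⟨hx, lt_add_one _⟩
    rw [hsplit x (f x), hsplit x (f x + 1)] at this
    linarith
  set p : E →L[ℝ] ℝ := (-β⁻¹) • φ.comp (ContinuousLinearMap.inl ℝ E ℝ)
  have hp : ∀ y, p (y - x) = (φ (x, 0) - φ (y, 0)) / β := fun y => by
    change -β⁻¹ * φ (y - x, 0) = _
    rw [show ((y - x, 0) : E × ℝ) = (y, 0) - (x, 0) by simp, map_sub]
    field_simp
    ring
  refine ⟨p, hf.isSubgradOn_of_forall_mem_interior hx fun y hy => ?_⟩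
  have hle := (nonneg_of_forall_pos_add_mul_pos (a := φ (y, f y) - φ (x, f x)) (b := β)
    fun t ht => by
      have := hφ (y, f y + t) ⟨hy, lt_add_of_pos_right _ ht⟩
      rw [hsplit y (f y + t)] at this
      rw [hsplit y (f y)]
      linarith).1
  rw [hsplit x, hsplit y, sub_nonneg] at hle
  have : (φ (x, 0) - φ (y, 0)) / β ≤ f y - f x := by rw [div_le_iff₀ hβ]; linarith
  rw [hp]
  linarith

theorem ConvexOn.exists_isSubgradOn_of_mem_intrinsicInterior (hf : ConvexOn ℝ X f)
    (hx : x ∈ intrinsicInterior ℝ X) : ∃ p : E →L[ℝ] ℝ, IsSubgradOn X f x p := by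
  obtain ⟨hxX, ε, hε, hball⟩ := mem_intrinsicInterior_iff_exists_ball.1 hx
  set D := (affineSpan ℝ X).direction
  have hxA : x ∈ affineSpan ℝ X := subset_affineSpan ℝ X hxX
  have hdir : ∀ y ∈ X, y - x ∈ D := fun y hy =>
    AffineSubspace.vsub_mem_direction (subset_affineSpan ℝ X hy) hxA
  -- restrict `f` to the translate `x + D` of the affine span, where `x` is an interior point
  have hF : ConvexOn ℝ (D.subtype ⁻¹' ((fun v => x + v) ⁻¹' X))
      ((f ∘ fun v => x + v) ∘ D.subtype) :=
    (hf.translate_right x).comp_linearMap D.subtype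
  have h0 : (0 : D) ∈ interior (D.subtype ⁻¹' ((fun v => x + v) ⁻¹' X)) := by
    refine mem_interior_iff_mem_nhds.2 (Metric.mem_nhds_iff.2 ⟨ε, hε, fun v hv => hball _ ?_ ?_⟩)
    · simpa [vadd_eq_add, add_comm] using AffineSubspace.vadd_mem_of_mem_direction v.2 hxA
    · simpa using hv
  obtain ⟨p', hp'⟩ := hF.exists_isSubgradOn_of_mem_interior h0
  obtain ⟨p, hpext, -⟩ := exists_extension_norm_eq D p'
  refine ⟨p, fun y hy => ?_⟩
  have := hp' ⟨y - x, hdir y hy⟩ (by simpa using hy)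
  rw [← hpext] at this
  simpa [-map_sub] using this

end Subgradient

section StrongConvexity

variable {E : Type*} [NormedAddCommGroup E] [NormedSpace ℝ E] {X S : Set E} {f g : E → ℝ}
  {m n : ℝ}

theorem StrongConvexOn.add (hf : StrongConvexOn S m f) (hg : StrongConvexOn S n g) :
    StrongConvexOn S (m + n) (f + g) := by
  unfold StrongConvexOn
  convert UniformConvexOn.add hf hg using 2
  simp only [Pi.add_apply]
  ring

theorem StrongConvexOn.const_smul (hf : StrongConvexOn S m f) {c : ℝ} (hc : 0 ≤ c) :
    StrongConvexOn S (c * m) (c • f) := by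
  refine ⟨hf.1, fun x hx y hy a b ha hb hab => ?_⟩
  have := mul_le_mul_of_nonneg_left (hf.2 hx hy ha hb hab) hc
  simp only [Pi.smul_apply, smul_eq_mul] at this ⊢
  linarith

theorem strongConvexOn_of_isSubgradOn (hS : Convex ℝ S) (hSX : S ⊆ X)
    (hsub : ∀ x ∈ S, ∃ p : E →L[ℝ] ℝ, IsSubgradOn X f x p)
    (hsc : ∀ x ∈ X, ∀ p : E →L[ℝ] ℝ, IsSubgradOn X f x p →
      ∀ y ∈ X, f x + p (y - x) + m / 2 * ‖y - x‖ ^ 2 ≤ f y) :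
    StrongConvexOn S m f := by
  refine ⟨hS, fun x hx y hy a b ha hb hab => ?_⟩
  obtain rfl : b = 1 - a := by linarith
  set z := a • x + (1 - a) • y
  obtain ⟨p, hp⟩ := hsub z (hS hx hy ha hb hab)
  have hxz : x - z = (1 - a) • (x - y) := by
    simp only [z]; module
  have hyz : y - z = -(a • (x - y)) := by
    simp only [z]; module
  have hx' := hsc z (hSX (hS hx hy ha hb hab)) p hp x (hSX hx)
  have hy' := hsc z (hSX (hS hx hy ha hb hab)) p hp y (hSX hy)
  rw [hxz, map_smul, norm_smul, Real.norm_of_nonneg hb, smul_eq_mul] at hx'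
  rw [hyz, map_neg, map_smul, norm_neg, norm_smul, Real.norm_of_nonneg ha, smul_eq_mul] at hy'
  simp only [smul_eq_mul]
  nlinarith [mul_le_mul_of_nonneg_left hx' ha, mul_le_mul_of_nonneg_left hy' hb]

theorem ConvexOn.strongConvexOn_intrinsicInterior [FiniteDimensional ℝ E] (hf : ConvexOn ℝ X f)
    (hsc : ∀ x ∈ X, ∀ p : E →L[ℝ] ℝ, IsSubgradOn X f x p →
      ∀ y ∈ X, f x + p (y - x) + m / 2 * ‖y - x‖ ^ 2 ≤ f y) :
    StrongConvexOn (intrinsicInterior ℝ X) m f :=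
  strongConvexOn_of_isSubgradOn hf.1.intrinsicInterior intrinsicInterior_subset
    (fun _ hx => hf.exists_isSubgradOn_of_mem_intrinsicInterior hx) hsc

-- Push both endpoints slightly towards `w`, into the relative interior, and let them return.
theorem IsMinOn.le_segment_of_strongConvexOn_intrinsicInterior (hf : ConvexOn ℝ X f)
    (hfS : StrongConvexOn (intrinsicInterior ℝ X) m f) {w xs y : E}
    (hw : w ∈ intrinsicInterior ℝ X) (hxs : xs ∈ X) (hmin : IsMinOn f X xs) (hy : y ∈ X)
    {b : ℝ} (hb : b ∈ Icc (0 : ℝ) 1) :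
    f xs ≤ (1 - b) * f xs + b * f y - (1 - b) * b * (m / 2 * ‖y - xs‖ ^ 2) := by
  have hwX := intrinsicInterior_subset hw
  obtain ⟨hb0, hb1⟩ := hb
  have := le_of_forall_mem_Ioo_le (a := f xs)
    (R := fun s => (1 - b) * (s * f w + (1 - s) * f xs) + b * (s * f w + (1 - s) * f y)
      - (1 - b) * b * (m / 2 * ((1 - s) * ‖y - xs‖) ^ 2)) (by fun_prop) fun s ⟨hs0, hs1⟩ => by
    have hu := hf.1.combo_intrinsicInterior_self_mem_intrinsicInterior hw hxs hs0
      (sub_nonneg.2 hs1.le) (add_sub_cancel _ _)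
    have hv := hf.1.combo_intrinsicInterior_self_mem_intrinsicInterior hw hy hs0
      (sub_nonneg.2 hs1.le) (add_sub_cancel _ _)
    have hmin_uv : f xs ≤ f _ := hmin (intrinsicInterior_subset
      (hfS.1 hu hv (sub_nonneg.2 hb1) hb0 (sub_add_cancel _ _)))
    have huv := hfS.2 hu hv (sub_nonneg.2 hb1) hb0 (sub_add_cancel _ _)
    have hfu : f (s • w + (1 - s) • xs) ≤ s * f w + (1 - s) * f xs :=
      hf.2 hwX hxs hs0.le (sub_nonneg.2 hs1.le) (add_sub_cancel _ _)
    have hfv : f (s • w + (1 - s) • y) ≤ s * f w + (1 - s) * f y :=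
      hf.2 hwX hy hs0.le (sub_nonneg.2 hs1.le) (add_sub_cancel _ _)
    have hnorm : ‖s • w + (1 - s) • xs - (s • w + (1 - s) • y)‖ = (1 - s) * ‖y - xs‖ := by
      rw [show s • w + (1 - s) • xs - (s • w + (1 - s) • y) = (1 - s) • (xs - y) by module,
        norm_smul, Real.norm_of_nonneg (sub_nonneg.2 hs1.le), norm_sub_rev]
    rw [hnorm, smul_eq_mul, smul_eq_mul] at huv
    beta_reduce at huv
    nlinarith [mul_le_mul_of_nonneg_left hfu (sub_nonneg.2 hb1), mul_le_mul_of_nonneg_left hfv hb0]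
  simpa using this

theorem IsMinOn.add_sq_norm_le_of_strongConvexOn_intrinsicInterior (hf : ConvexOn ℝ X f)
    (hfS : StrongConvexOn (intrinsicInterior ℝ X) m f) (hne : (intrinsicInterior ℝ X).Nonempty)
    {xs : E} (hxs : xs ∈ X) (hmin : IsMinOn f X xs) {y : E} (hy : y ∈ X) :
    f xs + m / 2 * ‖y - xs‖ ^ 2 ≤ f y := by
  obtain ⟨w, hw⟩ := hne
  have := le_of_forall_mem_Ioo_le (a := f xs)
    (R := fun b => f y - (1 - b) * (m / 2 * ‖y - xs‖ ^ 2)) (by fun_prop) fun b hb => by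
    have := hmin.le_segment_of_strongConvexOn_intrinsicInterior hf hfS hw hxs hy
      (Ioo_subset_Icc_self hb)
    refine le_of_mul_le_mul_left ?_ hb.1
    linarith
  simp only [sub_zero, one_mul] at this
  linarith

end StrongConvexity

theorem ConvexOn.convex_setOf_exists_le_and_le {E : Type*} [AddCommGroup E] [Module ℝ E]
    {X : Set E} {f g : E → ℝ} (hf : ConvexOn ℝ X f) (hg : ConvexOn ℝ X g) :
    Convex ℝ {q : ℝ × ℝ | ∃ y ∈ X, f y ≤ q.1 ∧ g y ≤ q.2} := by
  rintro _ ⟨y₁, hy₁, hf₁, hg₁⟩ _ ⟨y₂, hy₂, hf₂, hg₂⟩ a b ha hb hab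
  refine ⟨a • y₁ + b • y₂, hf.1 hy₁ hy₂ ha hb hab, ?_, ?_⟩
  · calc f (a • y₁ + b • y₂) ≤ a • f y₁ + b • f y₂ := hf.2 hy₁ hy₂ ha hb hab
      _ ≤ _ := by simp only [smul_eq_mul, Prod.fst_add, Prod.smul_fst]; gcongr
  · calc g (a • y₁ + b • y₂) ≤ a • g y₁ + b • g y₂ := hg.2 hy₁ hy₂ ha hb hab
      _ ≤ _ := by simp only [smul_eq_mul, Prod.snd_add, Prod.smul_snd]; gcongr

-- Separate `(f xs, 0)` from the open convex set of points lying strictly above some `(f y, g y)`.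
theorem ConvexOn.exists_lagrange_multiplier {E : Type*} [AddCommGroup E] [Module ℝ E]
    {X : Set E} {f g : E → ℝ} (hf : ConvexOn ℝ X f) (hg : ConvexOn ℝ X g) {w : E} (hw : w ∈ X)
    (hgw : g w < 0) {xs : E} (hopt : ∀ y ∈ X, g y ≤ 0 → f xs ≤ f y) :
    ∃ κ : ℝ, 0 ≤ κ ∧ ∀ y ∈ X, f xs ≤ f y + κ * g y := by
  set C := {q : ℝ × ℝ | ∃ y ∈ X, f y ≤ q.1 ∧ g y ≤ q.2} + Ioi (0 : ℝ) ×ˢ Ioi (0 : ℝ)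
  have hC : ∀ y ∈ X, ∀ s t : ℝ, 0 < s → 0 < t → (f y + s, g y + t) ∈ C := fun y hy s t hs ht =>
    ⟨(f y, g y), ⟨y, hy, le_rfl, le_rfl⟩, (s, t), ⟨hs, ht⟩, rfl⟩
  have hxsC : (f xs, 0) ∉ C := by
    rintro ⟨_, ⟨y, hy, hfy, hgy⟩, _, ⟨hs, ht⟩, hsum⟩
    simp only [Prod.ext_iff, Prod.fst_add, Prod.snd_add, mem_Ioi] at hsum hs ht
    linarith [hopt y hy (by linarith)]
  obtain ⟨φ, hφ⟩ := geometric_hahn_banach_point_open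
    ((hf.convex_setOf_exists_le_and_le hg).add ((convex_Ioi 0).prod (convex_Ioi 0)))
    ((isOpen_Ioi.prod isOpen_Ioi).add_left) hxsC
  set α := φ (1, 0)
  set β := φ (0, 1)
  have hsplit : ∀ a b : ℝ, φ (a, b) = a * α + b * β := fun a b => by
    rw [show ((a, b) : ℝ × ℝ) = a • (1, 0) + b • (0, 1) by simp, map_add, map_smul, map_smul,
      smul_eq_mul, smul_eq_mul]
  have hsep : ∀ y ∈ X, ∀ s t : ℝ, 0 < s → 0 < t →
      0 < ((f y - f xs) * α + g y * β) + (s * α + t * β) := fun y hy s t hs ht => by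
    have := hφ _ (hC y hy s t hs ht)
    rw [hsplit, hsplit] at this
    linarith
  have hα_nonneg : 0 ≤ α := (nonneg_of_forall_pos_add_mul_pos
    (a := (f w - f xs) * α + (g w + 1) * β) fun s hs => by linarith [hsep w hw s 1 hs one_pos]).2
  have hβ : 0 ≤ β := (nonneg_of_forall_pos_add_mul_pos
    (a := (f w - f xs + 1) * α + g w * β) fun t ht => by linarith [hsep w hw 1 t one_pos ht]).2
  -- Slater's point forbids a horizontal separating line
  have hα : 0 < α := by
    refine hα_nonneg.lt_of_ne fun hα0 => ?_
    have := hsep w hw 1 (-g w / 2) one_pos (by linarith)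
    rw [← hα0] at this
    nlinarith
  refine ⟨β / α, div_nonneg hβ hα.le, fun y hy => ?_⟩
  have := (nonneg_of_forall_pos_add_mul_pos (a := (f y - f xs) * α + g y * β) (b := α + β)
    fun t ht => by linarith [hsep y hy t t ht ht]).1
  rw [← sub_nonneg, show f y + β / α * g y - f xs = ((f y - f xs) * α + g y * β) / α by
    field_simp; ring]
  positivity

theorem strongly_convex_exp_func_to_arg_general
    {E : Type*} [NormedAddCommGroup E] [NormedSpace ℝ E] [FiniteDimensional ℝ E]
    {Ω : Type*} [MeasurableSpace Ω] (P : Measure Ω) [IsProbabilityMeasure P]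
    (X : Set E)
    (f g : E → ℝ) (hf : ConvexOn ℝ X f) (hg : ConvexOn ℝ X g)
    (μ : ℝ)
    (hfsc : ∀ x ∈ X, ∀ p : E →L[ℝ] ℝ, IsSubgradOn X f x p →
      ∀ y ∈ X, f x + p (y - x) + μ / 2 * ‖y - x‖ ^ 2 ≤ f y)
    (hgsc : ∀ x ∈ X, ∀ p : E →L[ℝ] ℝ, IsSubgradOn X g x p →
      ∀ y ∈ X, g x + p (y - x) + μ / 2 * ‖y - x‖ ^ 2 ≤ g y)
    (xbar : E) (hxbar : xbar ∈ intrinsicInterior ℝ X) (hgxbar : g xbar < 0)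
    (xs : E) (hxs : xs ∈ X) (hgxs : g xs ≤ 0)
    (hopt : ∀ y ∈ X, g y ≤ 0 → f xs ≤ f y)
    (ε : ℝ) (xt : Ω → E) (hxt : ∀ ω, xt ω ∈ X)
    (hint_f : Integrable (fun ω => f (xt ω)) P)
    (hint_n : Integrable (fun ω => ‖xt ω - xs‖ ^ 2) P)
    (hfε : (∫ ω, f (xt ω) ∂P) - f xs ≤ ε)
    (hgε : ∀ᵐ ω ∂P, g (xt ω) ≤ ε) :
    μ / 2 * ∫ ω, ‖xt ω - xs‖ ^ 2 ∂P ≤ ε := by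
  obtain ⟨κ, hκ, hmult⟩ :=
    hf.exists_lagrange_multiplier hg (intrinsicInterior_subset hxbar) hgxbar hopt
  have hmin : IsMinOn (f + κ • g) X xs := fun y hy => by
    change f xs + κ • g xs ≤ f y + κ • g y
    simp only [smul_eq_mul]
    linarith [hmult y hy, mul_nonpos_of_nonneg_of_nonpos hκ hgxs]
  have hgrowth : ∀ y ∈ X, (1 + κ) * (μ / 2 * ‖y - xs‖ ^ 2) ≤ f y - f xs + κ * g y := fun y hy => by
    have := hmin.add_sq_norm_le_of_strongConvexOn_intrinsicInterior (hf.add (hg.smul hκ))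
      ((hf.strongConvexOn_intrinsicInterior hfsc).add
        ((hg.strongConvexOn_intrinsicInterior hgsc).const_smul hκ)) ⟨xbar, hxbar⟩ hxs hy
    simp only [Pi.add_apply, smul_eq_mul] at this
    linarith [hmult xs hxs]
  have hae : ∀ᵐ ω ∂P, (1 + κ) * (μ / 2 * ‖xt ω - xs‖ ^ 2) ≤ f (xt ω) - f xs + κ * ε := by
    filter_upwards [hgε] with ω hω
    linarith [hgrowth (xt ω) (hxt ω), mul_le_mul_of_nonneg_left hω hκ]
  refine le_of_mul_le_mul_left (a := 1 + κ) ?_ (by linarith)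
  calc (1 + κ) * (μ / 2 * ∫ ω, ‖xt ω - xs‖ ^ 2 ∂P)
      = ∫ ω, (1 + κ) * (μ / 2 * ‖xt ω - xs‖ ^ 2) ∂P := by
        rw [integral_const_mul, integral_const_mul]
    _ ≤ ∫ ω, (f (xt ω) - f xs + κ * ε) ∂P :=
        integral_mono_ae ((hint_n.const_mul _).const_mul _)
          ((hint_f.sub (integrable_const _)).add (integrable_const _)) hae
    _ = (∫ ω, f (xt ω) ∂P) - f xs + κ * ε := by
        have hsub : Integrable (fun ω => f (xt ω) - f xs) P := hint_f.sub (integrable_const _)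
        rw [integral_add hsub (integrable_const _), integral_sub hint_f (integrable_const _)]
        simp
    _ ≤ (1 + κ) * ε := by linarith

/-- If `f` and `g` are `μ`-strongly convex on `X`, `x_*` solves the regular problem
`min {f(x) : x ∈ X, g(x) ≤ 0}`, and a random point `x̃` with values in `X` satisfies
`E f(x̃) − f(x_*) ≤ ε` and `g(x̃) ≤ ε` almost surely, then `μ/2 · E‖x̃ − x_*‖² ≤ ε`. -/
theorem strongly_convex_exp_func_to_arg
    {E : Type*} [NormedAddCommGroup E] [NormedSpace ℝ E] [FiniteDimensional ℝ E]
    {Ω : Type*} [MeasurableSpace Ω] (P : Measure Ω) [IsProbabilityMeasure P]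
    (X : Set E) (hXcl : IsClosed X) (hXconv : Convex ℝ X)
    (f g : E → ℝ) (hf : ConvexOn ℝ X f) (hg : ConvexOn ℝ X g)
    (μ : ℝ) (hμ : 0 < μ)
    (hfsc : ∀ x ∈ X, ∀ p : E →L[ℝ] ℝ, IsSubgradOn X f x p →
      ∀ y ∈ X, f x + p (y - x) + μ / 2 * ‖y - x‖ ^ 2 ≤ f y)
    (hgsc : ∀ x ∈ X, ∀ p : E →L[ℝ] ℝ, IsSubgradOn X g x p →
      ∀ y ∈ X, g x + p (y - x) + μ / 2 * ‖y - x‖ ^ 2 ≤ g y)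
    (xbar : E) (hxbar : xbar ∈ intrinsicInterior ℝ X) (hgxbar : g xbar < 0)
    (xs : E) (hxs : xs ∈ X) (hgxs : g xs ≤ 0)
    (hopt : ∀ y ∈ X, g y ≤ 0 → f xs ≤ f y)
    (ε : ℝ) (xt : Ω → E) (hxt : ∀ ω, xt ω ∈ X)
    (hint_f : Integrable (fun ω => f (xt ω)) P)
    (hint_n : Integrable (fun ω => ‖xt ω - xs‖ ^ 2) P)
    (hfε : (∫ ω, f (xt ω) ∂P) - f xs ≤ ε)
    (hgε : ∀ᵐ ω ∂P, g (xt ω) ≤ ε) :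
    μ / 2 * ∫ ω, ‖xt ω - xs‖ ^ 2 ∂P ≤ ε :=
  strongly_convex_exp_func_to_arg_general P X f g hf hg μ hfsc hgsc xbar hxbar hgxbar xs hxs hgxs
    hopt ε xt hxt hint_f hint_n hfε hgε
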